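/- Every boundedly compact homogeneous metric space is not shifted; that is, if X is a metric space in which every closed bounded subset is compact, and for every pair of points x, y ∈ X there exists an isometric embedding f : X → X with f(x) = y, then every isometric self-embedding of X is surjective. -/

import Mathlib

universe u v w

open Function Set

/-- `f` is an isometric (distance-preserving) embedding of metric spaces. -/
def IsIsomEmb {X : Type u} {Y : Type v} [MetricSpace X] [MetricSpace Y] (f : X → Y) : Prop :=
  ∀ a b : X, dist (f a) (f b) = dist a b

/-- `X` embeds isometrically into `Y`. -/
def IsomEmbeds (X : Type u) (Y : Type v) [MetricSpace X] [MetricSpace Y] : Prop :=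
  ∃ f : X → Y, IsIsomEmb f

/-- `X` and `Y` are isometric: there is a surjective isometric embedding of `X` onto `Y`. -/
def IsIsometricTo (X : Type u) (Y : Type v) [MetricSpace X] [MetricSpace Y] : Prop :=
  ∃ f : X → Y, IsIsomEmb f ∧ Surjective f

/-- `X` is not shifted: every isometric self-embedding of `X` is surjective. -/
def NotShifted (X : Type u) [MetricSpace X] : Prop :=
  ∀ f : X → X, IsIsomEmb f → Surjective f

/-- `Y` is universal for the family `M` of metric spaces. -/
def UnivFor {ι : Type w} (M : ι → Type u) [∀ i, MetricSpace (M i)]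
    (Y : Type v) [MetricSpace Y] : Prop :=
  ∀ i, IsomEmbeds (M i) Y

/-- `Y` is minimal universal for the family `M` of metric spaces: `Y` is `M`-universal and
every subset of `Y` (with the induced metric) which is `M`-universal equals `Y`. -/
def MinUnivFor {ι : Type w} (M : ι → Type u) [∀ i, MetricSpace (M i)]
    (Y : Type v) [MetricSpace Y] : Prop :=
  UnivFor M Y ∧ ∀ S : Set Y, UnivFor M ↥S → S = Set.univ

/-!
Compose an isometric self-embedding `f` with an isometric embedding `g` sending `f t` back to `t`;
then `g ∘ f` fixes `t`, so it maps every closed ball around `t` into itself. These balls are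
compact, and an isometry of a compact set into itself is onto: the orbit of a point `z` has
two iterates `h^[m] z`, `h^[n] z` (`m < n`) that are arbitrarily close, so `z` is arbitrarily
close to `h^[n - m] z`, a point of the closed set `h '' K`. Hence `g ∘ f` is surjective, and
since `g` is injective so is `f`.
-/

namespace Isometry

variable {X : Type*} [MetricSpace X] {h : X → X}

protected theorem iterate (hh : Isometry h) : ∀ n, Isometry h^[n]
  | 0 => isometry_id
  | n + 1 => (hh.iterate n).comp hh

theorem exists_dist_iterate_succ_lt {K : Set X} (hh : Isometry h) (hK : IsCompact K) {z : X}
    (horbit : ∀ n, h^[n] z ∈ K) {ε : ℝ} (hε : 0 < ε) : ∃ k, dist z (h^[k + 1] z) < ε := by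
  obtain ⟨l, -, φ, hφ, hl⟩ := hK.tendsto_subseq horbit
  obtain ⟨N, hN⟩ := Metric.cauchySeq_iff'.1 hl.cauchySeq ε hε
  have hlt : φ N < φ (N + 1) := hφ N.lt_succ_self
  refine ⟨φ (N + 1) - φ N - 1, ?_⟩
  rw [← (hh.iterate (φ N)).dist_eq, ← iterate_add_apply,
    show φ N + (φ (N + 1) - φ N - 1 + 1) = φ (N + 1) by omega, dist_comm]
  exact hN (N + 1) N.le_succ

theorem surjOn_of_mapsTo_of_isCompact {K : Set X} (hh : Isometry h) (hK : IsCompact K)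
    (hmaps : MapsTo h K K) : SurjOn h K K := by
  intro z hz
  have horbit : ∀ n, h^[n] z ∈ K := fun n => hmaps.iterate n hz
  rw [← (hK.image hh.continuous).isClosed.closure_eq, Metric.mem_closure_iff]
  intro ε hε
  obtain ⟨k, hk⟩ := hh.exists_dist_iterate_succ_lt hK horbit hε
  exact ⟨_, ⟨h^[k] z, horbit k, (iterate_succ_apply' h k z).symm⟩, hk⟩

theorem surjective_of_isFixedPt [ProperSpace X] (hh : Isometry h) {t : X} (ht : IsFixedPt h t) :
    Surjective h := by
  intro y
  have hmaps : MapsTo h (Metric.closedBall t (dist y t)) (Metric.closedBall t (dist y t)) := by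
    simpa only [ht.eq] using hh.mapsTo_closedBall t (dist y t)
  obtain ⟨w, -, hw⟩ := hh.surjOn_of_mapsTo_of_isCompact (isCompact_closedBall t _) hmaps
    (Metric.mem_closedBall.2 le_rfl)
  exact ⟨w, hw⟩

end Isometry

theorem statement5 {X : Type u} [MetricSpace X]
    (hbc : ∀ s : Set X, IsClosed s → Bornology.IsBounded s → IsCompact s)
    (hhom : ∀ x y : X, ∃ f : X → X, IsIsomEmb f ∧ f x = y) :
    NotShifted X := by
  have : ProperSpace X :=
    ⟨fun x r => hbc _ Metric.isClosed_closedBall Metric.isBounded_closedBall⟩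
  intro f hf t
  obtain ⟨g, hg, hgt⟩ := hhom (f t) t
  have hgi : Isometry g := .of_dist_eq hg
  have hgf : Surjective (g ∘ f) := (hgi.comp (.of_dist_eq hf)).surjective_of_isFixedPt hgt
  exact hgf.of_comp_left hgi.injective t
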